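/- In the formal expansion of an asymptotically conical gradient expanding soliton, the coefficient f₂ of r^{−2} in f is f₂ = −(1/3)[R − n(n−1)], where R is the scalar curvature of h, as forced by the radial equation −H^{jk}H_{jk,rr} + (1/2)H^{ij}H_{jk,r}H^{kl}H_{li,r} + 2f_{,rr} + 1 = 0 together with h₀ = −2[Ric(h) − (n−1)h]. -/

import Mathlib

noncomputable section

open Filter Asymptotics

/-- Points of coordinate space. -/
abbrev Pt (n : ℕ) : Type := EuclideanSpace ℝ (Fin n)

/-- The `i`-th coordinate partial derivative of a function. -/
def pd {n : ℕ} (i : Fin n) (F : Pt n → ℝ) (x : Pt n) : ℝ :=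
  fderiv ℝ F x (EuclideanSpace.single i 1)

/-- Christoffel symbols `Γ^k_{ij}` of a metric `g`, given in coordinates as a
matrix-valued function; indices are raised using the matrix inverse of `g`. -/
def christoffel {n : ℕ} (g : Pt n → Matrix (Fin n) (Fin n) ℝ) (k i j : Fin n) (x : Pt n) : ℝ :=
  (1 / 2) * ∑ l, (g x)⁻¹ k l *
    (pd i (fun y => g y j l) x + pd j (fun y => g y i l) x - pd l (fun y => g y i j) x)

/-- Ricci curvature `R_{ij}` of `g` in coordinates. -/
def ricci {n : ℕ} (g : Pt n → Matrix (Fin n) (Fin n) ℝ) (i j : Fin n) (x : Pt n) : ℝ :=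
  (∑ k, pd k (christoffel g k i j) x) - (∑ k, pd i (christoffel g k k j) x)
    + (∑ k, ∑ l, christoffel g k k l x * christoffel g l i j x)
    - (∑ k, ∑ l, christoffel g k i l x * christoffel g l k j x)

/-- Scalar curvature `R = g^{ij} R_{ij}`. -/
def scalarCurv {n : ℕ} (g : Pt n → Matrix (Fin n) (Fin n) ℝ) (x : Pt n) : ℝ :=
  ∑ i, ∑ j, (g x)⁻¹ i j * ricci g i j x

/-- Hessian `(∇∇ f)_{ij} = ∂_i ∂_j f - Γ^k_{ij} ∂_k f`. -/
def hessian {n : ℕ} (g : Pt n → Matrix (Fin n) (Fin n) ℝ) (f : Pt n → ℝ) (i j : Fin n)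
    (x : Pt n) : ℝ :=
  pd i (pd j f) x - ∑ k, christoffel g k i j x * pd k f x

/-- Laplacian `Δ f = g^{ij} (∇∇ f)_{ij}`. -/
def laplacian {n : ℕ} (g : Pt n → Matrix (Fin n) (Fin n) ℝ) (f : Pt n → ℝ) (x : Pt n) : ℝ :=
  ∑ i, ∑ j, (g x)⁻¹ i j * hessian g f i j x

/-- `|∇ f|² = g^{ij} ∂_i f ∂_j f`. -/
def gradSq {n : ℕ} (g : Pt n → Matrix (Fin n) (Fin n) ℝ) (f : Pt n → ℝ) (x : Pt n) : ℝ :=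
  ∑ i, ∑ j, (g x)⁻¹ i j * pd i f x * pd j f x

/-- Covariant derivative `∇_a T_{bc}` of a 2-tensor `T` with respect to the
Levi-Civita connection of `g`. -/
def covDeriv2 {n : ℕ} (g : Pt n → Matrix (Fin n) (Fin n) ℝ) (T : Fin n → Fin n → Pt n → ℝ)
    (a b c : Fin n) (x : Pt n) : ℝ :=
  pd a (T b c) x - (∑ d, christoffel g d a b x * T d c x)
    - ∑ d, christoffel g d a c x * T b d x

/-- `g` is a smooth Riemannian metric in coordinates. -/
structure IsMetric {n : ℕ} (g : Pt n → Matrix (Fin n) (Fin n) ℝ) : Prop where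
  smooth : ∀ i j, ContDiff ℝ (⊤ : ℕ∞) fun x => g x i j
  symm : ∀ x, (g x).IsSymm
  posdef : ∀ x, (g x).PosDef

/-- Tangential partial derivative `∂/∂x^i` on `(0,∞) × Y` (coordinate `0` is `r`). -/
def pdT {n : ℕ} (i : Fin n) (F : Pt (n + 1) → ℝ) (x : Pt (n + 1)) : ℝ := pd i.succ F x

/-- Radial partial derivative `∂/∂r`. -/
def pdr {n : ℕ} (F : Pt (n + 1) → ℝ) (x : Pt (n + 1)) : ℝ := pd 0 F x

/-- The metric `g = dr² + H(r)` in block form, coordinate `0` being `r`. -/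
def warp {n : ℕ} (H : Pt (n + 1) → Matrix (Fin n) (Fin n) ℝ) (x : Pt (n + 1)) :
    Matrix (Fin (n + 1)) (Fin (n + 1)) ℝ :=
  Matrix.of fun a b =>
    Fin.cases (Fin.cases (1 : ℝ) (fun _ => 0) b) (fun i => Fin.cases 0 (fun j => H x i j) b) a

/-- Christoffel symbols of the slice metric `H(r)` on `Y`. -/
def christoffelT {n : ℕ} (H : Pt (n + 1) → Matrix (Fin n) (Fin n) ℝ) (k i j : Fin n)
    (x : Pt (n + 1)) : ℝ :=
  (1 / 2) * ∑ l, (H x)⁻¹ k l *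
    (pdT i (fun y => H y j l) x + pdT j (fun y => H y i l) x - pdT l (fun y => H y i j) x)

/-- Ricci curvature `R^H_{ij}` of the slice metric `H(r)`. -/
def ricciT {n : ℕ} (H : Pt (n + 1) → Matrix (Fin n) (Fin n) ℝ) (i j : Fin n)
    (x : Pt (n + 1)) : ℝ :=
  (∑ k, pdT k (christoffelT H k i j) x) - (∑ k, pdT i (christoffelT H k k j) x)
    + (∑ k, ∑ l, christoffelT H k k l x * christoffelT H l i j x)
    - (∑ k, ∑ l, christoffelT H k i l x * christoffelT H l k j x)

/-- Hessian with respect to the slice metric `H(r)`. -/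
def hessT {n : ℕ} (H : Pt (n + 1) → Matrix (Fin n) (Fin n) ℝ) (f : Pt (n + 1) → ℝ)
    (i j : Fin n) (x : Pt (n + 1)) : ℝ :=
  pdT i (pdT j f) x - ∑ k, christoffelT H k i j x * pdT k f x

/-- Covariant derivative `∇_a T_{bc}` with respect to the slice metric `H(r)`. -/
def covT {n : ℕ} (H : Pt (n + 1) → Matrix (Fin n) (Fin n) ℝ) (T : Fin n → Fin n → Pt (n + 1) → ℝ)
    (a b c : Fin n) (x : Pt (n + 1)) : ℝ :=
  pdT a (T b c) x - (∑ d, christoffelT H d a b x * T d c x)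
    - ∑ d, christoffelT H d a c x * T b d x

/-- The tangential coordinates of a point of `(0,∞) × Y`. -/
def tailPt {n : ℕ} (x : Pt (n + 1)) : Pt n := WithLp.toLp 2 fun i => x i.succ

/-- The point of `(0,∞) × Y` with radial coordinate `r` and tangential coordinates `y`. -/
def consPt {n : ℕ} (r : ℝ) (y : Pt n) : Pt (n + 1) := WithLp.toLp 2 fun i => Fin.cases r (fun j => y j) i

/-- Truncation of the formal series `H = r²h + h₀ + r⁻²h₂ + ⋯` after the term `r^{-2m} h_{2m}`. -/
def Htrunc {n : ℕ} (h : Pt n → Matrix (Fin n) (Fin n) ℝ)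
    (h2 : ℕ → Pt n → Matrix (Fin n) (Fin n) ℝ) (m : ℕ) (x : Pt (n + 1)) :
    Matrix (Fin n) (Fin n) ℝ :=
  Matrix.of fun j k =>
    (x 0) ^ 2 * h (tailPt x) j k
      + ∑ i ∈ Finset.range (m + 1), ((x 0) ^ (2 * i))⁻¹ * h2 i (tailPt x) j k

/-- Truncation of the formal series `f = -r²/4 + f₀ + r⁻²f₂ + ⋯` after `r^{-2m} f_{2m}`. -/
def ftrunc {n : ℕ} (f2 : ℕ → Pt n → ℝ) (m : ℕ) (x : Pt (n + 1)) : ℝ :=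
  -(x 0) ^ 2 / 4 + ∑ i ∈ Finset.range (m + 1), ((x 0) ^ (2 * i))⁻¹ * f2 i (tailPt x)

/-- The gradient expanding soliton tensor `Ric_g + Hess_g f + ½ g` for the truncated
series, where `g = dr² + H(r)`. -/
def solitonE {n : ℕ} (h : Pt n → Matrix (Fin n) (Fin n) ℝ)
    (h2 : ℕ → Pt n → Matrix (Fin n) (Fin n) ℝ) (f2 : ℕ → Pt n → ℝ) (m : ℕ)
    (a b : Fin (n + 1)) (x : Pt (n + 1)) : ℝ :=
  ricci (warp (Htrunc h h2 m)) a b x + hessian (warp (Htrunc h h2 m)) (ftrunc f2 m) a b x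
    + (1 / 2) * warp (Htrunc h h2 m) x a b

/-- The formal series `g = dr² + r²h + Σ r^{-2i} h_{2i}`, `f = -r²/4 + Σ r^{-2i} f_{2i}`
satisfy the gradient expanding soliton equation `Ric + Hess f + ½ g = 0` to all orders in
`r⁻¹`: every component of the soliton tensor of the truncations decays to arbitrarily
high order as `r → ∞` once enough terms are kept. -/
def SolvesFormally {n : ℕ} (h : Pt n → Matrix (Fin n) (Fin n) ℝ)
    (h2 : ℕ → Pt n → Matrix (Fin n) (Fin n) ℝ) (f2 : ℕ → Pt n → ℝ) : Prop :=
  ∀ (k : ℕ) (a b : Fin (n + 1)) (y : Pt n), ∃ m₀ : ℕ, ∀ m ≥ m₀,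
    (fun r : ℝ => solitonE h h2 f2 m a b (consPt r y)) =O[atTop] fun r : ℝ => r ^ (-(k : ℤ))

/-! ### Auxiliary machinery for the proof of `f2_coefficient` -/

namespace F2
open Finset Matrix

theorem pd_const {n : ℕ} (i : Fin n) (c : ℝ) (x : Pt n) : pd i (fun _ => c) x = 0 := by
  simp [pd]

theorem pd_congr_nhds {N : ℕ} {F G : Pt N → ℝ} {x : Pt N} (h : F =ᶠ[nhds x] G) (i : Fin N) :
    pd i F x = pd i G x := by
  rw [pd, pd, h.fderiv_eq]

def ℓ (N : ℕ) (i : Fin N) : Pt N →L[ℝ] ℝ := EuclideanSpace.proj i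

@[simp] theorem ℓ_apply (N : ℕ) (i : Fin N) (x : Pt N) : ℓ N i x = x i := rfl

def tailCLM (n : ℕ) : Pt (n+1) →L[ℝ] Pt n :=
  LinearMap.toContinuousLinearMap
    { toFun := tailPt
      map_add' := fun _ _ => rfl
      map_smul' := fun _ _ => rfl }

@[simp] theorem tailCLM_apply {n : ℕ} (x : Pt (n+1)) : tailCLM n x = tailPt x := rfl

def e₀ (n : ℕ) : Pt (n+1) := EuclideanSpace.single 0 1

@[simp] theorem tailPt_e₀ {n : ℕ} : tailPt (e₀ n) = (0 : Pt n) := by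
  ext i
  simp [e₀, tailPt, EuclideanSpace.single_apply, Fin.succ_ne_zero]

@[simp] theorem e₀_zero {n : ℕ} : e₀ n 0 = 1 := by
  simp [e₀, EuclideanSpace.single_apply]

theorem tailCLM_e₀ {n : ℕ} : tailCLM n (e₀ n) = 0 := tailPt_e₀

theorem pd_zero_eq {n : ℕ} (F : Pt (n+1) → ℝ) (x : Pt (n+1)) :
    pd 0 F x = fderiv ℝ F x (e₀ n) := rfl

def HasPd0 {n : ℕ} (F : Pt (n+1) → ℝ) (x : Pt (n+1)) (v : ℝ) : Prop :=
  ∃ L : Pt (n+1) →L[ℝ] ℝ, HasFDerivAt F L x ∧ L (e₀ n) = v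

theorem HasPd0.pd_eq {n : ℕ} {F : Pt (n+1) → ℝ} {x v} (h : HasPd0 F x v) : pd 0 F x = v := by
  obtain ⟨L, hL, he⟩ := h
  rw [pd, hL.fderiv]
  exact he

theorem HasPd0.differentiableAt {n : ℕ} {F : Pt (n+1) → ℝ} {x v} (h : HasPd0 F x v) :
    DifferentiableAt ℝ F x := h.choose_spec.1.differentiableAt

theorem HasPd0.add {n : ℕ} {F G : Pt (n+1) → ℝ} {x v w} (hF : HasPd0 F x v)
    (hG : HasPd0 G x w) : HasPd0 (fun z => F z + G z) x (v + w) := by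
  obtain ⟨L, hL, he⟩ := hF; obtain ⟨M, hM, hm⟩ := hG
  exact ⟨L + M, hL.add hM, by simp [he, hm]⟩

theorem HasPd0.const {n : ℕ} (c : ℝ) (x : Pt (n+1)) : HasPd0 (fun _ => c) x 0 :=
  ⟨0, hasFDerivAt_const c x, rfl⟩

theorem HasPd0.sum {n : ℕ} {ι : Type*} (s : Finset ι) (F : ι → Pt (n+1) → ℝ) (v : ι → ℝ)
    {x} (h : ∀ i ∈ s, HasPd0 (F i) x (v i)) :
    HasPd0 (fun z => ∑ i ∈ s, F i z) x (∑ i ∈ s, v i) := by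
  classical
  induction s using Finset.induction with
  | empty => simpa using HasPd0.const 0 x
  | insert a s' hni ih =>
    simp only [Finset.sum_insert hni]
    exact HasPd0.add (h a (Finset.mem_insert_self a s'))
      (ih fun i hi => h i (Finset.mem_insert_of_mem hi))

theorem HasPd0.sep {n : ℕ} (u : ℝ → ℝ) {u' : ℝ} (F : Pt n → ℝ) {x : Pt (n+1)}
    (hu : HasDerivAt u u' (x 0)) (hF : DifferentiableAt ℝ F (tailPt x)) :
    HasPd0 (fun z => u (z 0) * F (tailPt z)) x (u' * F (tailPt x)) := by
  have h1 : HasFDerivAt (fun z : Pt (n+1) => u (z 0)) (u' • (ℓ (n+1) 0)) x :=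
    hu.comp_hasFDerivAt x (ℓ (n+1) 0).hasFDerivAt
  have h2 : HasFDerivAt (fun z : Pt (n+1) => F (tailPt z))
      ((fderiv ℝ F (tailPt x)).comp (tailCLM n)) x :=
    hF.hasFDerivAt.comp x (tailCLM n).hasFDerivAt
  refine ⟨_, h1.mul h2, ?_⟩
  simp
  ring

theorem hasDerivAt_pow_inv (k : ℕ) {s : ℝ} (hs : s ≠ 0) :
    HasDerivAt (fun t : ℝ => (t ^ k)⁻¹) (-(k : ℝ) * (s ^ (k+1))⁻¹) s := by
  have h := (hasDerivAt_pow k s).fun_inv (pow_ne_zero k hs)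
  refine h.congr_deriv (Eq.symm ?_)
  rcases k with _ | j
  · simp
  · rw [Nat.add_sub_cancel]
    field_simp
    ring

/-! ### warp entries -/

@[simp] theorem warp_00 {n : ℕ} (H : Pt (n+1) → Matrix (Fin n) (Fin n) ℝ) (x : Pt (n+1)) :
    warp H x 0 0 = 1 := rfl

@[simp] theorem warp_0s {n : ℕ} (H : Pt (n+1) → Matrix (Fin n) (Fin n) ℝ) (x : Pt (n+1))
    (j : Fin n) : warp H x 0 j.succ = 0 := rfl

@[simp] theorem warp_s0 {n : ℕ} (H : Pt (n+1) → Matrix (Fin n) (Fin n) ℝ) (x : Pt (n+1))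
    (i : Fin n) : warp H x i.succ 0 = 0 := rfl

@[simp] theorem warp_ss {n : ℕ} (H : Pt (n+1) → Matrix (Fin n) (Fin n) ℝ) (x : Pt (n+1))
    (i j : Fin n) : warp H x i.succ j.succ = H x i j := rfl

/-! ### Christoffel symbols of a warped metric -/

@[simp] theorem pd_warp00 {n : ℕ} (H : Pt (n+1) → Matrix (Fin n) (Fin n) ℝ)
    (k : Fin (n+1)) (x : Pt (n+1)) : pd k (fun y => warp H y 0 0) x = 0 := by
  simp only [warp_00]; exact pd_const k 1 x

@[simp] theorem pd_warp0s {n : ℕ} (H : Pt (n+1) → Matrix (Fin n) (Fin n) ℝ)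
    (k : Fin (n+1)) (j : Fin n) (x : Pt (n+1)) : pd k (fun y => warp H y 0 j.succ) x = 0 := by
  simp only [warp_0s]; exact pd_const k 0 x

@[simp] theorem pd_warps0 {n : ℕ} (H : Pt (n+1) → Matrix (Fin n) (Fin n) ℝ)
    (k : Fin (n+1)) (i : Fin n) (x : Pt (n+1)) : pd k (fun y => warp H y i.succ 0) x = 0 := by
  simp only [warp_s0]; exact pd_const k 0 x

theorem christoffel_warp_lower00 {n : ℕ} (H : Pt (n+1) → Matrix (Fin n) (Fin n) ℝ)
    (k : Fin (n+1)) (x : Pt (n+1)) : christoffel (warp H) k 0 0 x = 0 := by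
  rw [christoffel, Finset.sum_eq_zero]
  · ring
  intro l _
  induction l using Fin.cases with
  | zero => simp [pd_const]
  | succ j => simp [pd_const]

theorem christoffel_warp_s0 {n : ℕ} (H : Pt (n+1) → Matrix (Fin n) (Fin n) ℝ)
    (k : Fin (n+1)) (i : Fin n) (x : Pt (n+1)) :
    christoffel (warp H) k i.succ 0 x
      = (1/2) * ∑ m', (warp H x)⁻¹ k m'.succ * pd 0 (fun z => H z i m') x := by
  rw [christoffel, Fin.sum_univ_succ]
  simp only [pd_warp00, pd_warp0s, pd_warps0, warp_ss, add_zero, zero_add, sub_zero,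
    sub_self, mul_zero, zero_mul]

theorem christoffel_warp_0s {n : ℕ} (H : Pt (n+1) → Matrix (Fin n) (Fin n) ℝ)
    (k : Fin (n+1)) (j : Fin n) (x : Pt (n+1)) :
    christoffel (warp H) k 0 j.succ x
      = (1/2) * ∑ m', (warp H x)⁻¹ k m'.succ * pd 0 (fun z => H z j m') x := by
  rw [christoffel, Fin.sum_univ_succ]
  simp only [pd_warp00, pd_warp0s, pd_warps0, warp_ss, add_zero, zero_add, sub_zero,
    sub_self, mul_zero, zero_mul]

/-! ### block inverse -/

theorem warp_inv_eq {n : ℕ} {H : Pt (n+1) → Matrix (Fin n) (Fin n) ℝ} {x : Pt (n+1)}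
    (hd : IsUnit (H x).det) :
    (warp H x)⁻¹ = warp (fun z => (H z)⁻¹) x := by
  apply Matrix.inv_eq_right_inv
  ext a b
  rw [Matrix.mul_apply, Fin.sum_univ_succ]
  have hmul := Matrix.mul_nonsing_inv (H x) hd
  induction a using Fin.cases with
  | zero =>
    induction b using Fin.cases with
    | zero => simp [Matrix.one_apply]
    | succ j => simp [Matrix.one_apply, (Fin.succ_ne_zero j).symm]
  | succ i =>
    induction b using Fin.cases with
    | zero => simp [Matrix.one_apply, Fin.succ_ne_zero i]
    | succ j =>
      have h2 := congrFun (congrFun hmul i) j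
      rw [Matrix.mul_apply] at h2
      simp only [warp_ss, warp_s0, warp_0s, zero_mul, zero_add]
      rw [h2]
      simp [Matrix.one_apply, Fin.succ_inj]
/-! ### smoothness of det, adjugate, inverse entries -/

section Smooth
variable {E : Type*} [NormedAddCommGroup E] [NormedSpace ℝ E]

theorem contDiffAt_mdet {N : ℕ} {M : E → Matrix (Fin N) (Fin N) ℝ} {x : E}
    (h : ∀ i j, ContDiffAt ℝ (⊤ : ℕ∞) (fun z => M z i j) x) :
    ContDiffAt ℝ (⊤ : ℕ∞) (fun z => (M z).det) x := by
  simp only [Matrix.det_apply']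
  exact ContDiffAt.sum fun σ _ =>
    contDiffAt_const.mul (contDiffAt_prod fun i _ => h _ _)

theorem contDiffAt_madj {N : ℕ} {M : E → Matrix (Fin N) (Fin N) ℝ} {x : E}
    (h : ∀ i j, ContDiffAt ℝ (⊤ : ℕ∞) (fun z => M z i j) x) (i j : Fin N) :
    ContDiffAt ℝ (⊤ : ℕ∞) (fun z => (M z).adjugate i j) x := by
  simp only [Matrix.adjugate_apply]
  apply contDiffAt_mdet
  intro a b
  simp only [Matrix.updateRow_apply]
  by_cases hab : a = j
  · simp only [hab, if_pos rfl]
    exact contDiffAt_const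
  · simp only [if_neg hab]
    exact h a b

theorem contDiffAt_minv {N : ℕ} {M : E → Matrix (Fin N) (Fin N) ℝ} {x : E}
    (h : ∀ i j, ContDiffAt ℝ (⊤ : ℕ∞) (fun z => M z i j) x)
    (hd : (M x).det ≠ 0) (i j : Fin N) :
    ContDiffAt ℝ (⊤ : ℕ∞) (fun z => (M z)⁻¹ i j) x := by
  have hrw : ∀ z, (M z)⁻¹ i j = ((M z).det)⁻¹ * (M z).adjugate i j := by
    intro z
    rw [Matrix.inv_def, Matrix.smul_apply, Ring.inverse_eq_inv', smul_eq_mul]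
  simp only [hrw]
  exact ((contDiffAt_mdet h).inv hd).mul (contDiffAt_madj h i j)

end Smooth

/-! ### entries of Htrunc and their radial derivatives -/

theorem Htrunc_apply {n : ℕ} (h : Pt n → Matrix (Fin n) (Fin n) ℝ)
    (h2 : ℕ → Pt n → Matrix (Fin n) (Fin n) ℝ) (m : ℕ) (x : Pt (n+1)) (j k : Fin n) :
    Htrunc h h2 m x j k = (x 0)^2 * h (tailPt x) j k
      + ∑ p ∈ Finset.range (m+1), ((x 0)^(2*p))⁻¹ * h2 p (tailPt x) j k := rfl

/-- the radial derivative of the entries of `Htrunc` -/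
def SdE {n : ℕ} (h : Pt n → Matrix (Fin n) (Fin n) ℝ)
    (h2 : ℕ → Pt n → Matrix (Fin n) (Fin n) ℝ) (m : ℕ) (x : Pt (n+1)) (j k : Fin n) : ℝ :=
  2 * (x 0) * h (tailPt x) j k
    + ∑ p ∈ Finset.range (m+1), (-(2*p : ℝ) * ((x 0)^(2*p+1))⁻¹) * h2 p (tailPt x) j k

variable {n : ℕ} {h : Pt n → Matrix (Fin n) (Fin n) ℝ}
  {h2 : ℕ → Pt n → Matrix (Fin n) (Fin n) ℝ} {f2 : ℕ → Pt n → ℝ} {m : ℕ}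

theorem hasPd0_Htrunc (hmet : IsMetric h) (hh2 : ∀ i j k, ContDiff ℝ (⊤ : ℕ∞) fun x => h2 i x j k)
    {x : Pt (n+1)} (hx : x 0 ≠ 0) (j k : Fin n) :
    HasPd0 (fun z => Htrunc h h2 m z j k) x (SdE h h2 m x j k) := by
  simp only [Htrunc_apply, SdE]
  refine HasPd0.add ?_ (HasPd0.sum _ _ _ fun p _ => ?_)
  · have hu : HasDerivAt (fun t : ℝ => t^2) (2 * (x 0)) (x 0) := by
      simpa using hasDerivAt_pow 2 (x 0)
    exact HasPd0.sep _ (fun y => h y j k) hu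
      (((hmet.smooth j k).differentiable (by simp)).differentiableAt)
  · have hval : (-(2*(p:ℝ)) * ((x 0)^(2*p+1))⁻¹) * h2 p (tailPt x) j k
        = (-((2*p : ℕ):ℝ) * ((x 0)^(2*p+1))⁻¹) * h2 p (tailPt x) j k := by push_cast; ring
    rw [show (-(2*(p:ℝ)) * ((x 0)^(2*p+1))⁻¹) = (-((2*p : ℕ):ℝ) * ((x 0)^(2*p+1))⁻¹) by
      push_cast; ring]
    exact HasPd0.sep _ (fun y => h2 p y j k) (hasDerivAt_pow_inv (2*p) hx)
      (((hh2 p j k).differentiable (by simp)).differentiableAt)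

theorem contDiffAt_coord {N : ℕ} (i : Fin N) {x : Pt N} :
    ContDiffAt ℝ (⊤ : ℕ∞) (fun z : Pt N => z i) x := (ℓ N i).contDiff.contDiffAt

theorem contDiffAt_tail_comp {F : Pt n → ℝ} (hF : ContDiff ℝ (⊤ : ℕ∞) F) {x : Pt (n+1)} :
    ContDiffAt ℝ (⊤ : ℕ∞) (fun z : Pt (n+1) => F (tailPt z)) x :=
  (hF.comp (tailCLM n).contDiff).contDiffAt

theorem contDiffAt_Htrunc (hmet : IsMetric h) (hh2 : ∀ i j k, ContDiff ℝ (⊤ : ℕ∞) fun x => h2 i x j k)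
    {x : Pt (n+1)} (hx : x 0 ≠ 0) (j k : Fin n) :
    ContDiffAt ℝ (⊤ : ℕ∞) (fun z => Htrunc h h2 m z j k) x := by
  simp only [Htrunc_apply]
  refine ContDiffAt.add ?_ (ContDiffAt.sum fun p _ => ?_)
  · exact ((contDiffAt_coord 0).pow 2).mul (contDiffAt_tail_comp (hmet.smooth j k))
  · exact (((contDiffAt_coord 0).pow (2*p)).inv (pow_ne_zero _ hx)).mul
      (contDiffAt_tail_comp (hh2 p j k))

theorem contDiffAt_SdE (hmet : IsMetric h) (hh2 : ∀ i j k, ContDiff ℝ (⊤ : ℕ∞) fun x => h2 i x j k)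
    {x : Pt (n+1)} (hx : x 0 ≠ 0) (j k : Fin n) :
    ContDiffAt ℝ (⊤ : ℕ∞) (fun z => SdE h h2 m z j k) x := by
  simp only [SdE]
  refine ContDiffAt.add ?_ (ContDiffAt.sum fun p _ => ?_)
  · exact (contDiffAt_const.mul (contDiffAt_coord 0)).mul
      (contDiffAt_tail_comp (hmet.smooth j k))
  · exact (contDiffAt_const.mul
      (((contDiffAt_coord 0).pow (2*p+1)).inv (pow_ne_zero _ hx))).mul
      (contDiffAt_tail_comp (hh2 p j k))

/-! ### radial derivatives of `ftrunc` -/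

def fd1 {n : ℕ} (f2 : ℕ → Pt n → ℝ) (m : ℕ) (x : Pt (n+1)) : ℝ :=
  -(x 0)/2 + ∑ p ∈ Finset.range (m+1), (-(2*p:ℝ) * ((x 0)^(2*p+1))⁻¹) * f2 p (tailPt x)

theorem hasPd0_ftrunc (hf2 : ∀ i, ContDiff ℝ (⊤ : ℕ∞) (f2 i)) {x : Pt (n+1)} (hx : x 0 ≠ 0) :
    HasPd0 (ftrunc f2 m) x (fd1 f2 m x) := by
  have : ftrunc f2 m = fun z : Pt (n+1) =>
      (fun t : ℝ => -t^2/4) (z 0) * (fun _ : Pt n => (1:ℝ)) (tailPt z)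
        + ∑ p ∈ Finset.range (m+1), ((z 0)^(2*p))⁻¹ * f2 p (tailPt z) := by
    funext z
    simp only [ftrunc]
    try ring
  rw [this, fd1]
  refine HasPd0.add ?_ (HasPd0.sum _ _ _ fun p _ => ?_)
  · have hu : HasDerivAt (fun t : ℝ => -t^2/4) (-(x 0)/2) (x 0) := by
      have := ((hasDerivAt_pow 2 (x 0)).fun_neg).div_const 4
      refine this.congr_deriv (Eq.symm ?_)
      ring
    have := HasPd0.sep (fun t : ℝ => -t^2/4) (fun _ : Pt n => (1:ℝ)) hu
      (differentiableAt_const 1)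
    simpa using this
  · rw [show (-(2*(p:ℝ)) * ((x 0)^(2*p+1))⁻¹) = (-((2*p : ℕ):ℝ) * ((x 0)^(2*p+1))⁻¹) by
      push_cast; ring]
    exact HasPd0.sep _ (f2 p) (hasDerivAt_pow_inv (2*p) hx)
      ((hf2 p).differentiable (by simp)).differentiableAt

theorem hasPd0_fd1 (hf2 : ∀ i, ContDiff ℝ (⊤ : ℕ∞) (f2 i)) {x : Pt (n+1)} (hx : x 0 ≠ 0) :
    HasPd0 (fd1 f2 m) x
      (-(1/2) + ∑ p ∈ Finset.range (m+1),
        ((2*p:ℝ) * (2*p+1) * ((x 0)^(2*p+2))⁻¹) * f2 p (tailPt x)) := by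
  have hrw : fd1 f2 m = fun z : Pt (n+1) =>
      (fun t : ℝ => -t/2) (z 0) * (fun _ : Pt n => (1:ℝ)) (tailPt z)
        + ∑ p ∈ Finset.range (m+1),
            (fun t : ℝ => -(2*p:ℝ) * (t^(2*p+1))⁻¹) (z 0) * f2 p (tailPt z) := by
    funext z
    simp only [fd1]
    try ring
  rw [hrw]
  refine HasPd0.add ?_ (HasPd0.sum _ _
    (fun (p : ℕ) => ((2*(p:ℝ)) * (2*(p:ℝ)+1) * ((x 0)^(2*p+2))⁻¹) * f2 p (tailPt x))
    fun p _ => ?_)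
  · have hu : HasDerivAt (fun t : ℝ => -t/2) (-(1/2) : ℝ) (x 0) := by
      have h := ((hasDerivAt_id' (x 0)).fun_neg).div_const 2
      refine h.congr_deriv (Eq.symm ?_)
      norm_num
    have := HasPd0.sep (fun t : ℝ => -t/2) (fun _ : Pt n => (1:ℝ)) hu
      (differentiableAt_const 1)
    simpa using this
  · have hu : HasDerivAt (fun t : ℝ => -(2*p:ℝ) * (t^(2*p+1))⁻¹)
        ((2*p:ℝ) * (2*p+1) * ((x 0)^(2*p+2))⁻¹) (x 0) := by
      have h := (hasDerivAt_pow_inv (2*p+1) hx).const_mul (-(2*p:ℝ))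
      have hexp : 2*p+1+1 = 2*p+2 := rfl
      rw [hexp] at h
      refine h.congr_deriv (Eq.symm ?_)
      push_cast
      ring
    exact HasPd0.sep _ (f2 p) hu ((hf2 p).differentiable (by simp)).differentiableAt

theorem isOpen_coord0_ne {n : ℕ} : IsOpen {z : Pt (n+1) | z 0 ≠ 0} := by
  have : {z : Pt (n+1) | z 0 ≠ 0} = (fun z : Pt (n+1) => z 0) ⁻¹' {(0:ℝ)}ᶜ := rfl
  rw [this]
  exact (isOpen_compl_singleton).preimage (ℓ (n+1) 0).continuous

theorem pd0_pd0_ftrunc (hf2 : ∀ i, ContDiff ℝ (⊤ : ℕ∞) (f2 i)) {x : Pt (n+1)} (hx : x 0 ≠ 0) :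
    pd 0 (pd 0 (ftrunc f2 m)) x
      = -(1/2) + ∑ p ∈ Finset.range (m+1),
          ((2*p:ℝ) * (2*p+1) * ((x 0)^(2*p+2))⁻¹) * f2 p (tailPt x) := by
  have hev : pd 0 (ftrunc f2 m) =ᶠ[nhds x] fd1 f2 m := by
    filter_upwards [isOpen_coord0_ne.mem_nhds hx] with z hz
    exact (hasPd0_ftrunc hf2 hz).pd_eq
  rw [pd_congr_nhds hev 0]
  exact (hasPd0_fd1 hf2 hx).pd_eq
/-! ### one-variable model at infinity: `t = 1/r` -/

section OneVar
variable {n : ℕ}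

def Shat (A : Matrix (Fin n) (Fin n) ℝ) (B : ℕ → Matrix (Fin n) (Fin n) ℝ) (m : ℕ) (t : ℝ) : Matrix (Fin n) (Fin n) ℝ :=
  Matrix.of fun j k => A j k + ∑ p ∈ Finset.range (m+1), t^(2*p+2) * B p j k

def Sdhat (A : Matrix (Fin n) (Fin n) ℝ) (B : ℕ → Matrix (Fin n) (Fin n) ℝ) (m : ℕ) (t : ℝ) : Matrix (Fin n) (Fin n) ℝ :=
  Matrix.of fun j k => ∑ p ∈ Finset.range (m+1), (2*(p:ℝ)+2) * t^(2*p+1) * B p j k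

def Kmat (A : Matrix (Fin n) (Fin n) ℝ) (B : ℕ → Matrix (Fin n) (Fin n) ℝ) (m : ℕ) (t : ℝ) : Matrix (Fin n) (Fin n) ℝ :=
  Matrix.of fun i j => ∑ m', (Shat A B m t)⁻¹ i m' * Sdhat A B m t j m'

def wF (A : Matrix (Fin n) (Fin n) ℝ) (B : ℕ → Matrix (Fin n) (Fin n) ℝ) (m : ℕ) (t : ℝ) : ℝ := ∑ i, Kmat A B m t i i

def vF (A : Matrix (Fin n) (Fin n) ℝ) (B : ℕ → Matrix (Fin n) (Fin n) ℝ) (m : ℕ) (t : ℝ) : ℝ := ∑ i, ∑ j, Kmat A B m t i j * Kmat A B m t j i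

@[simp] theorem Shat_apply (A : Matrix (Fin n) (Fin n) ℝ) (B : ℕ → Matrix (Fin n) (Fin n) ℝ) (m : ℕ) (t : ℝ) (j k : Fin n) :
    Shat A B m t j k = A j k + ∑ p ∈ Finset.range (m+1), t^(2*p+2) * B p j k := rfl

@[simp] theorem Sdhat_apply (A : Matrix (Fin n) (Fin n) ℝ) (B : ℕ → Matrix (Fin n) (Fin n) ℝ) (m : ℕ) (t : ℝ) (j k : Fin n) :
    Sdhat A B m t j k = ∑ p ∈ Finset.range (m+1), (2*(p:ℝ)+2) * t^(2*p+1) * B p j k := rfl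

@[simp] theorem Kmat_apply (A : Matrix (Fin n) (Fin n) ℝ) (B : ℕ → Matrix (Fin n) (Fin n) ℝ) (m : ℕ) (t : ℝ) (i j : Fin n) :
    Kmat A B m t i j = ∑ m', (Shat A B m t)⁻¹ i m' * Sdhat A B m t j m' := rfl

theorem Shat_zero (A : Matrix (Fin n) (Fin n) ℝ) (B : ℕ → Matrix (Fin n) (Fin n) ℝ) (m : ℕ) : Shat A B m 0 = A := by
  ext j k
  simp [zero_pow]

theorem Sdhat_zero (A : Matrix (Fin n) (Fin n) ℝ) (B : ℕ → Matrix (Fin n) (Fin n) ℝ) (m : ℕ) : Sdhat A B m 0 = 0 := by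
  ext j k
  simp [zero_pow]

theorem Kmat_zero (A : Matrix (Fin n) (Fin n) ℝ) (B : ℕ → Matrix (Fin n) (Fin n) ℝ) (m : ℕ) : Kmat A B m 0 = 0 := by
  ext i j
  simp [Sdhat_zero]

theorem contDiffAt_Shat (A : Matrix (Fin n) (Fin n) ℝ) (B : ℕ → Matrix (Fin n) (Fin n) ℝ) (m : ℕ) (t : ℝ) (j k : Fin n) :
    ContDiffAt ℝ (⊤ : ℕ∞) (fun s => Shat A B m s j k) t := by
  simp only [Shat_apply]
  exact contDiffAt_const.add (ContDiffAt.sum fun p _ =>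
    (contDiff_id.pow _).contDiffAt.mul contDiffAt_const)

theorem contDiffAt_Sdhat (A : Matrix (Fin n) (Fin n) ℝ) (B : ℕ → Matrix (Fin n) (Fin n) ℝ) (m : ℕ) (t : ℝ) (j k : Fin n) :
    ContDiffAt ℝ (⊤ : ℕ∞) (fun s => Sdhat A B m s j k) t := by
  simp only [Sdhat_apply]
  exact ContDiffAt.sum fun p _ =>
    (contDiffAt_const.mul (contDiff_id.pow _).contDiffAt).mul contDiffAt_const

theorem continuous_detShat (A : Matrix (Fin n) (Fin n) ℝ) (B : ℕ → Matrix (Fin n) (Fin n) ℝ) (m : ℕ) : Continuous fun t => (Shat A B m t).det :=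
  continuous_iff_continuousAt.mpr fun t =>
    (contDiffAt_mdet (fun i j => contDiffAt_Shat A B m t i j)).continuousAt

theorem isOpen_Uset (A : Matrix (Fin n) (Fin n) ℝ) (B : ℕ → Matrix (Fin n) (Fin n) ℝ) (m : ℕ) : IsOpen {t : ℝ | (Shat A B m t).det ≠ 0} :=
  isOpen_compl_singleton.preimage (continuous_detShat A B m)

theorem contDiffAt_Kmat (A : Matrix (Fin n) (Fin n) ℝ) (B : ℕ → Matrix (Fin n) (Fin n) ℝ) (m : ℕ) {t : ℝ} (hdet : (Shat A B m t).det ≠ 0) (i j : Fin n) :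
    ContDiffAt ℝ (⊤ : ℕ∞) (fun s => Kmat A B m s i j) t := by
  simp only [Kmat_apply]
  exact ContDiffAt.sum fun m' _ =>
    (contDiffAt_minv (fun a b => contDiffAt_Shat A B m t a b) hdet i m').mul
      (contDiffAt_Sdhat A B m t j m')

theorem contDiffAt_wF (A : Matrix (Fin n) (Fin n) ℝ) (B : ℕ → Matrix (Fin n) (Fin n) ℝ) (m : ℕ) {t : ℝ} (hdet : (Shat A B m t).det ≠ 0) :
    ContDiffAt ℝ (⊤ : ℕ∞) (wF A B m) t := by
  have : wF A B m = fun s => ∑ i, Kmat A B m s i i := rfl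
  rw [this]
  exact ContDiffAt.sum fun i _ => contDiffAt_Kmat A B m hdet i i

theorem continuousAt_deriv_wF (A : Matrix (Fin n) (Fin n) ℝ) (B : ℕ → Matrix (Fin n) (Fin n) ℝ) (m : ℕ) (hdetA : A.det ≠ 0) :
    ContinuousAt (deriv (wF A B m)) 0 := by
  have hU : IsOpen {t : ℝ | (Shat A B m t).det ≠ 0} := isOpen_Uset A B m
  have h0 : (0:ℝ) ∈ {t : ℝ | (Shat A B m t).det ≠ 0} := by
    simp [Shat_zero, hdetA]
  have hcd : ContDiffOn ℝ (⊤ : ℕ∞) (wF A B m) {t : ℝ | (Shat A B m t).det ≠ 0} :=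
    fun t ht => (contDiffAt_wF A B m ht).contDiffWithinAt
  exact (hcd.continuousOn_deriv_of_isOpen hU (by simp)).continuousAt (hU.mem_nhds h0)

theorem hasDerivAt_Sdhat_zero (A : Matrix (Fin n) (Fin n) ℝ) (B : ℕ → Matrix (Fin n) (Fin n) ℝ) (m : ℕ) (j k : Fin n) :
    HasDerivAt (fun t => Sdhat A B m t j k) (2 * B 0 j k) 0 := by
  simp only [Sdhat_apply]
  have h : HasDerivAt (fun t : ℝ => ∑ p ∈ Finset.range (m+1), (2*(p:ℝ)+2) * t^(2*p+1) * B p j k)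
      (∑ p ∈ Finset.range (m+1),
        (2*(p:ℝ)+2) * ((2*p+1 : ℕ) * (0:ℝ)^(2*p) ) * B p j k) 0 := by
    apply HasDerivAt.fun_sum
    intro p _
    have hp : HasDerivAt (fun t : ℝ => t^(2*p+1)) ((2*p+1 : ℕ) * (0:ℝ)^(2*p)) 0 := by
      simpa using hasDerivAt_pow (2*p+1) (0:ℝ)
    exact (hp.const_mul _).mul_const _
  convert h using 1
  rw [Finset.sum_eq_single 0]
  · norm_num
  · intro p _ hp
    have h2p : (0:ℝ)^(2*p) = 0 := zero_pow (by omega)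
    rw [h2p]
    ring
  · intro habs
    exact absurd (Finset.mem_range.mpr (by omega)) habs

theorem hasDerivAt_wF_zero (A : Matrix (Fin n) (Fin n) ℝ) (B : ℕ → Matrix (Fin n) (Fin n) ℝ) (m : ℕ) (hdetA : A.det ≠ 0) :
    HasDerivAt (wF A B m) (2 * ∑ i, ∑ j, A⁻¹ i j * B 0 i j) 0 := by
  have hbig : HasDerivAt (wF A B m)
      (∑ i, ∑ m', (deriv (fun s => (Shat A B m s)⁻¹ i m') 0 * Sdhat A B m 0 i m'
        + (Shat A B m 0)⁻¹ i m' * (2 * B 0 i m'))) 0 := by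
    have : wF A B m = fun s => ∑ i, ∑ m', (Shat A B m s)⁻¹ i m' * Sdhat A B m s i m' := rfl
    rw [this]
    apply HasDerivAt.fun_sum
    intro i _
    apply HasDerivAt.fun_sum
    intro m' _
    have hdet0 : (Shat A B m 0).det ≠ 0 := by rw [Shat_zero]; exact hdetA
    have hinv : HasDerivAt (fun s => (Shat A B m s)⁻¹ i m')
        (deriv (fun s => (Shat A B m s)⁻¹ i m') 0) 0 :=
      ((contDiffAt_minv (fun a b => contDiffAt_Shat A B m 0 a b) hdet0 i
        m').differentiableAt (by simp)).hasDerivAt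
    exact hinv.mul (hasDerivAt_Sdhat_zero A B m i m')
  convert hbig using 1
  rw [Finset.mul_sum]
  refine Finset.sum_congr rfl fun i _ => ?_
  rw [Finset.mul_sum]
  refine Finset.sum_congr rfl fun j _ => ?_
  rw [Sdhat_zero, Shat_zero]
  simp
  ring

theorem deriv_wF_zero (A : Matrix (Fin n) (Fin n) ℝ) (B : ℕ → Matrix (Fin n) (Fin n) ℝ) (m : ℕ) (hdetA : A.det ≠ 0) :
    deriv (wF A B m) 0 = 2 * ∑ i, ∑ j, A⁻¹ i j * B 0 i j :=
  (hasDerivAt_wF_zero A B m hdetA).deriv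

theorem continuousAt_vF (A : Matrix (Fin n) (Fin n) ℝ) (B : ℕ → Matrix (Fin n) (Fin n) ℝ) (m : ℕ) (hdetA : A.det ≠ 0) : ContinuousAt (vF A B m) 0 := by
  have hdet0 : (Shat A B m 0).det ≠ 0 := by rw [Shat_zero]; exact hdetA
  have : vF A B m = fun s => ∑ i, ∑ j, Kmat A B m s i j * Kmat A B m s j i := rfl
  rw [this]
  exact tendsto_finset_sum _ fun i _ => tendsto_finset_sum _ fun j _ =>
    ((contDiffAt_Kmat A B m hdet0 i j).continuousAt.mul
      (contDiffAt_Kmat A B m hdet0 j i).continuousAt)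

theorem vF_zero (A : Matrix (Fin n) (Fin n) ℝ) (B : ℕ → Matrix (Fin n) (Fin n) ℝ) (m : ℕ) : vF A B m 0 = 0 := by
  simp [vF, Kmat_zero]

end OneVar
/-! ### the radial line and scaling identities -/

section Bridge
variable {n : ℕ}

@[simp] theorem consPt_zero (r : ℝ) (y : Pt n) : consPt r y 0 = r := rfl

@[simp] theorem consPt_succ (r : ℝ) (y : Pt n) (i : Fin n) : consPt r y i.succ = y i := rfl

@[simp] theorem tailPt_consPt (r : ℝ) (y : Pt n) : tailPt (consPt r y) = y := by
  ext i
  rfl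

theorem hasDerivAt_consPt (y : Pt n) (r : ℝ) :
    HasDerivAt (fun s : ℝ => consPt s y) (e₀ n) r := by
  have hfn : (fun s : ℝ => consPt s y) = fun s : ℝ => s • (e₀ n) + consPt 0 y := by
    funext s
    ext i
    induction i using Fin.cases with
    | zero =>
      show s = s • (e₀ n) 0 + consPt 0 y 0
      simp
    | succ j =>
      show y j = s • (e₀ n) j.succ + consPt 0 y j.succ
      have : (e₀ n) j.succ = 0 := by
        simp [e₀, EuclideanSpace.single_apply, Fin.succ_ne_zero]
      simp [this]
  rw [hfn]
  simpa using ((hasDerivAt_id r).smul_const (e₀ n)).add_const (consPt 0 y)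

theorem deriv_along (F : Pt (n+1) → ℝ) (y : Pt n) (r : ℝ)
    (hF : DifferentiableAt ℝ F (consPt r y)) :
    deriv (fun s => F (consPt s y)) r = pd 0 F (consPt r y) := by
  have h1 := hF.hasFDerivAt.comp_hasDerivAt r (hasDerivAt_consPt y r)
  have h2 : HasDerivAt (fun s => F (consPt s y)) (fderiv ℝ F (consPt r y) (e₀ n)) r := h1
  rw [h2.deriv]
  rfl

theorem matrix_smul_inv {N : ℕ} (c : ℝ) (M : Matrix (Fin N) (Fin N) ℝ) (hc : c ≠ 0)
    (hM : M.det ≠ 0) : (c • M)⁻¹ = c⁻¹ • M⁻¹ := by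
  apply Matrix.inv_eq_right_inv
  rw [Matrix.smul_mul, Matrix.mul_smul, smul_smul, mul_inv_cancel₀ hc, one_smul]
  exact Matrix.mul_nonsing_inv M (isUnit_iff_ne_zero.mpr hM)

variable {h : Pt n → Matrix (Fin n) (Fin n) ℝ} {h2 : ℕ → Pt n → Matrix (Fin n) (Fin n) ℝ}
  {m : ℕ}

theorem Htrunc_consPt (y : Pt n) {r : ℝ} (hr : r ≠ 0) :
    Htrunc h h2 m (consPt r y) = (r^2) • Shat (h y) (fun p => h2 p y) m r⁻¹ := by
  ext j k
  rw [Htrunc_apply, Matrix.smul_apply, Shat_apply]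
  rw [consPt_zero, tailPt_consPt, smul_eq_mul, mul_add, Finset.mul_sum]
  congr 1
  refine Finset.sum_congr rfl fun p _ => ?_
  rw [inv_pow]
  rw [show 2*p+2 = 2*p + 2 from rfl]
  field_simp
  ring

theorem SdE_consPt (y : Pt n) {r : ℝ} (hr : r ≠ 0) (j k : Fin n) :
    SdE h h2 m (consPt r y) j k
      = (2*r) * Shat (h y) (fun p => h2 p y) m r⁻¹ j k
        - Sdhat (h y) (fun p => h2 p y) m r⁻¹ j k := by
  rw [SdE, consPt_zero, tailPt_consPt]
  have key : ∀ p ∈ Finset.range (m+1),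
      (-(2*(p:ℝ)) * ((r)^(2*p+1))⁻¹) * h2 p y j k
        = 2*r*((r⁻¹)^(2*p+2) * h2 p y j k) - (2*(p:ℝ)+2) * (r⁻¹)^(2*p+1) * h2 p y j k := by
    intro p _
    rw [inv_pow, inv_pow]
    field_simp
    ring
  rw [Finset.sum_congr rfl key, Finset.sum_sub_distrib, Shat_apply, Sdhat_apply,
    mul_add, Finset.mul_sum]
  ring

theorem Shat_isSymm {A : Matrix (Fin n) (Fin n) ℝ} {B : ℕ → Matrix (Fin n) (Fin n) ℝ}
    (hA : A.IsSymm) (hB : ∀ p, (B p).IsSymm) (m : ℕ) (t : ℝ) (j k : Fin n) :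
    Shat A B m t j k = Shat A B m t k j := by
  rw [Shat_apply, Shat_apply, hA.apply k j]
  congr 1
  exact Finset.sum_congr rfl fun p _ => by rw [(hB p).apply k j]

/-- the key scaling identity `(★)` -/
theorem star_identity (A : Matrix (Fin n) (Fin n) ℝ) (B : ℕ → Matrix (Fin n) (Fin n) ℝ)
    (m : ℕ) (hA : A.IsSymm) (hB : ∀ p, (B p).IsSymm) {r : ℝ} (hr : r ≠ 0)
    (hdet : (Shat A B m r⁻¹).det ≠ 0) (i j : Fin n) :
    (1/2) * ∑ m', ((r^2) • Shat A B m r⁻¹)⁻¹ i m'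
        * ((2*r) * Shat A B m r⁻¹ j m' - Sdhat A B m r⁻¹ j m')
      = r⁻¹ * (1 : Matrix (Fin n) (Fin n) ℝ) i j
        - (1/2) * (r^2)⁻¹ * Kmat A B m r⁻¹ i j := by
  rw [matrix_smul_inv _ _ (pow_ne_zero 2 hr) hdet]
  have hterm : ∀ m' ∈ (Finset.univ : Finset (Fin n)),
      ((r^2)⁻¹ • (Shat A B m r⁻¹)⁻¹) i m'
          * ((2*r) * Shat A B m r⁻¹ j m' - Sdhat A B m r⁻¹ j m')
        = (r^2)⁻¹ * (2*r) * ((Shat A B m r⁻¹)⁻¹ i m' * Shat A B m r⁻¹ m' j)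
          - (r^2)⁻¹ * ((Shat A B m r⁻¹)⁻¹ i m' * Sdhat A B m r⁻¹ j m') := by
    intro m' _
    rw [Matrix.smul_apply, smul_eq_mul, Shat_isSymm hA hB m _ m' j]
    ring
  rw [Finset.sum_congr rfl hterm, Finset.sum_sub_distrib, ← Finset.mul_sum, ← Finset.mul_sum]
  have hmul : ∑ m', (Shat A B m r⁻¹)⁻¹ i m' * Shat A B m r⁻¹ m' j
      = (1 : Matrix (Fin n) (Fin n) ℝ) i j := by
    rw [← Matrix.mul_apply, Matrix.nonsing_inv_mul _ (isUnit_iff_ne_zero.mpr hdet)]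
  rw [hmul, Kmat_apply]
  field_simp

/-- expansion of the quadratic Christoffel sum -/
theorem sum_gamma_expand (K : Matrix (Fin n) (Fin n) ℝ) (a c : ℝ) :
    ∑ i, ∑ j, (a * (1 : Matrix (Fin n) (Fin n) ℝ) i j - c * K i j)
        * (a * (1 : Matrix (Fin n) (Fin n) ℝ) j i - c * K j i)
      = (n:ℝ) * a^2 - 2*a*c*(∑ i, K i i) + c^2 * (∑ i, ∑ j, K i j * K j i) := by
  have expand : ∀ i j : Fin n,
      (a * (1 : Matrix (Fin n) (Fin n) ℝ) i j - c * K i j)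
        * (a * (1 : Matrix (Fin n) (Fin n) ℝ) j i - c * K j i)
      = a^2 * ((1 : Matrix (Fin n) (Fin n) ℝ) i j * (1 : Matrix (Fin n) (Fin n) ℝ) j i)
        - a*c*((1 : Matrix (Fin n) (Fin n) ℝ) i j * K j i)
        - a*c*(K i j * (1 : Matrix (Fin n) (Fin n) ℝ) j i)
        + c^2*(K i j * K j i) := by
    intro i j
    ring
  simp_rw [expand]
  simp only [Finset.sum_add_distrib, Finset.sum_sub_distrib]
  have s1 : ∑ i : Fin n, ∑ j : Fin n, a^2 * ((1 : Matrix (Fin n) (Fin n) ℝ) i j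
      * (1 : Matrix (Fin n) (Fin n) ℝ) j i) = (n:ℝ) * a^2 := by
    simp [Matrix.one_apply, Finset.sum_ite_eq, Finset.mul_sum]
  have s2 : ∑ i : Fin n, ∑ j : Fin n,
      a*c*((1 : Matrix (Fin n) (Fin n) ℝ) i j * K j i) = a*c*(∑ i, K i i) := by
    simp [Matrix.one_apply, Finset.sum_ite_eq, Finset.mul_sum]
  have s3 : ∑ i : Fin n, ∑ j : Fin n,
      a*c*(K i j * (1 : Matrix (Fin n) (Fin n) ℝ) j i) = a*c*(∑ i, K i i) := by
    simp [Matrix.one_apply, Finset.sum_ite_eq', Finset.mul_sum, mul_ite]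
  have s4 : ∑ i : Fin n, ∑ j : Fin n, c^2*(K i j * K j i)
      = c^2 * (∑ i, ∑ j, K i j * K j i) := by
    simp [Finset.mul_sum]
  rw [s1, s2, s3, s4]
  ring

end Bridge
/-! ### the tail term and the main pointwise identity -/

section Main
variable {n : ℕ} {h : Pt n → Matrix (Fin n) (Fin n) ℝ}
  {h2 : ℕ → Pt n → Matrix (Fin n) (Fin n) ℝ} {f2 : ℕ → Pt n → ℝ}

def tailF (c : ℕ → ℝ) (m : ℕ) (t : ℝ) : ℝ :=
  ∑ p ∈ Finset.range (m+1), (2*(p:ℝ))*(2*(p:ℝ)+1) * c p * t^(2*p-2)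

theorem continuous_tailF (c : ℕ → ℝ) (m : ℕ) : Continuous (tailF c m) := by
  apply continuous_finset_sum
  intro p _
  exact (continuous_const.mul (continuous_pow _))

theorem tailF_zero (c : ℕ → ℝ) {m : ℕ} (hm : 1 ≤ m) : tailF c m 0 = 6 * c 1 := by
  rw [tailF, Finset.sum_eq_single 1]
  · norm_num
  · intro p _ hp
    rcases Nat.eq_zero_or_pos p with h0 | h1
    · subst h0; norm_num
    · have : 2*p-2 ≠ 0 := by omega
      rw [zero_pow this, mul_zero]
  · intro habs
    exact absurd (Finset.mem_range.mpr (by omega)) habs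

set_option maxHeartbeats 1000000 in
/-- The main pointwise identity for the `(r,r)`-component of the soliton tensor of the
truncated expansion, at radius `r`. -/
theorem main_identity (hmet : IsMetric h)
    (hh2smooth : ∀ i j k, ContDiff ℝ (⊤ : ℕ∞) fun x => h2 i x j k)
    (hh2symm : ∀ i x, (h2 i x).IsSymm)
    (hf2smooth : ∀ i, ContDiff ℝ (⊤ : ℕ∞) (f2 i))
    (y : Pt n) (m : ℕ) {r : ℝ} (hr : 0 < r)
    (hdet : (Shat (h y) (fun p => h2 p y) m r⁻¹).det ≠ 0) :
    solitonE h h2 f2 m 0 0 (consPt r y)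
      = (-(1/2) * deriv (wF (h y) (fun p => h2 p y) m) r⁻¹
          - (1/4) * vF (h y) (fun p => h2 p y) m r⁻¹) * (r^4)⁻¹
        + ∑ p ∈ Finset.range (m+1),
            (2*(p:ℝ))*(2*(p:ℝ)+1) * ((r^(2*p+2))⁻¹) * f2 p y := by
  classical
  have hrne : r ≠ 0 := hr.ne'
  set x : Pt (n+1) := consPt r y with hxdef
  have hx0 : x 0 ≠ 0 := by rw [hxdef, consPt_zero]; exact hrne
  have hAsymm : (h y).IsSymm := hmet.symm y
  have hBsymm : ∀ p, ((fun p => h2 p y) p).IsSymm := fun p => hh2symm p y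
  -- determinant of the truncated metric along the ray
  have hdet_line : ∀ s : ℝ, s ≠ 0 → (Shat (h y) (fun p => h2 p y) m s⁻¹).det ≠ 0 →
      (Htrunc h h2 m (consPt s y)).det ≠ 0 := by
    intro s hs hd
    rw [Htrunc_consPt y hs, Matrix.det_smul]
    exact mul_ne_zero (pow_ne_zero _ (pow_ne_zero _ hs)) hd
  have hHdet : (Htrunc h h2 m x).det ≠ 0 := hdet_line r hrne hdet
  -- the key value of the tangential Christoffel sums along the ray
  have key : ∀ s : ℝ, s ≠ 0 → (Shat (h y) (fun p => h2 p y) m s⁻¹).det ≠ 0 →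
      ∀ i j : Fin n,
      (1/2) * ∑ m', (Htrunc h h2 m (consPt s y))⁻¹ i m' * SdE h h2 m (consPt s y) j m'
        = s⁻¹ * (1 : Matrix (Fin n) (Fin n) ℝ) i j
          - (1/2) * (s^2)⁻¹ * Kmat (h y) (fun p => h2 p y) m s⁻¹ i j := by
    intro s hs hd i j
    have hsd : ∀ m' : Fin n, SdE h h2 m (consPt s y) j m'
        = (2*s) * Shat (h y) (fun p => h2 p y) m s⁻¹ j m'
          - Sdhat (h y) (fun p => h2 p y) m s⁻¹ j m' := fun m' => SdE_consPt y hs j m'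
    rw [Htrunc_consPt y hs]
    calc (1/2) * ∑ m', ((s^2) • Shat (h y) (fun p => h2 p y) m s⁻¹)⁻¹ i m'
          * SdE h h2 m (consPt s y) j m'
        = (1/2) * ∑ m', ((s^2) • Shat (h y) (fun p => h2 p y) m s⁻¹)⁻¹ i m'
          * ((2*s) * Shat (h y) (fun p => h2 p y) m s⁻¹ j m'
            - Sdhat (h y) (fun p => h2 p y) m s⁻¹ j m') := by
          congr 1
          exact Finset.sum_congr rfl fun m' _ => by rw [hsd m']
      _ = _ := star_identity _ _ _ hAsymm hBsymm hs hd i j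
  -- Christoffel values at x
  have hIu : IsUnit (Htrunc h h2 m x).det := isUnit_iff_ne_zero.mpr hHdet
  have hwinv : ∀ (i m' : Fin n),
      (warp (Htrunc h h2 m) x)⁻¹ i.succ m'.succ = (Htrunc h h2 m x)⁻¹ i m' := by
    intro i m'
    rw [warp_inv_eq hIu, warp_ss]
  have hpdH : ∀ (j m' : Fin n),
      pd 0 (fun z => Htrunc h h2 m z j m') x = SdE h h2 m x j m' := fun j m' =>
    (hasPd0_Htrunc hmet hh2smooth hx0 j m').pd_eq
  have hGamma : ∀ i j : Fin n,
      (1/2) * ∑ m', (warp (Htrunc h h2 m) x)⁻¹ i.succ m'.succ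
          * pd 0 (fun z => Htrunc h h2 m z j m') x
        = r⁻¹ * (1 : Matrix (Fin n) (Fin n) ℝ) i j
          - (1/2) * (r^2)⁻¹ * Kmat (h y) (fun p => h2 p y) m r⁻¹ i j := by
    intro i j
    have : ∑ m', (warp (Htrunc h h2 m) x)⁻¹ i.succ m'.succ
          * pd 0 (fun z => Htrunc h h2 m z j m') x
        = ∑ m', (Htrunc h h2 m x)⁻¹ i m' * SdE h h2 m x j m' := by
      exact Finset.sum_congr rfl fun m' _ => by rw [hwinv i m', hpdH j m']
    rw [this]
    exact key r hrne hdet i j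
  -- the diagonal radial-derivative terms
  set δ : Fin n → ℝ :=
    fun i => deriv (fun t => Kmat (h y) (fun p => h2 p y) m t i i) r⁻¹ with hδdef
  have hKderiv : ∀ i : Fin n,
      HasDerivAt (fun t => Kmat (h y) (fun p => h2 p y) m t i i) (δ i) r⁻¹ := by
    intro i
    exact ((contDiffAt_Kmat _ _ m hdet i i).differentiableAt (by simp)).hasDerivAt
  have hPhi : ∀ i : Fin n,
      pd 0 (christoffel (warp (Htrunc h h2 m)) i.succ i.succ 0) x
        = -(r^2)⁻¹ + (r^3)⁻¹ * Kmat (h y) (fun p => h2 p y) m r⁻¹ i i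
          + (1/2) * (r^4)⁻¹ * δ i := by
    intro i
    -- the function agrees near x with an explicit smooth function χ
    have ev1 : ∀ᶠ z in nhds x, z 0 ≠ 0 :=
      Filter.eventually_of_mem (isOpen_coord0_ne.mem_nhds hx0) fun z hz => hz
    have ev2 : ∀ᶠ z in nhds x, (Htrunc h h2 m z).det ≠ 0 :=
      ((contDiffAt_mdet fun a b => contDiffAt_Htrunc hmet hh2smooth hx0 a b).continuousAt).eventually_ne hHdet
    have hev : christoffel (warp (Htrunc h h2 m)) i.succ i.succ 0 =ᶠ[nhds x]
        fun z => (1/2) * ∑ m', (Htrunc h h2 m z)⁻¹ i m' * SdE h h2 m z i m' := by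
      filter_upwards [ev1, ev2] with z hz1 hz2
      rw [christoffel_warp_s0]
      congr 1
      refine Finset.sum_congr rfl fun m' _ => ?_
      rw [warp_inv_eq (isUnit_iff_ne_zero.mpr hz2), warp_ss,
        (hasPd0_Htrunc hmet hh2smooth hz1 i m').pd_eq]
    rw [pd_congr_nhds hev 0]
    -- differentiate the explicit function along the ray
    have hdiff : DifferentiableAt ℝ
        (fun z => (1/2) * ∑ m', (Htrunc h h2 m z)⁻¹ i m' * SdE h h2 m z i m') x := by
      apply DifferentiableAt.const_mul
      apply DifferentiableAt.fun_sum
      intro m' _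
      exact ((contDiffAt_minv (fun a b => contDiffAt_Htrunc hmet hh2smooth hx0 a b)
        hHdet i m').differentiableAt (by simp)).mul
        ((contDiffAt_SdE hmet hh2smooth hx0 i m').differentiableAt (by simp))
    rw [← deriv_along _ y r hdiff]
    -- the restricted function agrees near r with an explicit function of one variable
    have evr : (fun s => (1/2) * ∑ m', (Htrunc h h2 m (consPt s y))⁻¹ i m'
          * SdE h h2 m (consPt s y) i m') =ᶠ[nhds r]
        fun s => s⁻¹ - (1/2) * (s^2)⁻¹ * Kmat (h y) (fun p => h2 p y) m s⁻¹ i i := by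
      have hc1 : ∀ᶠ s in nhds r, 0 < s := lt_mem_nhds hr
      have hc2 : ∀ᶠ s in nhds r,
          (Shat (h y) (fun p => h2 p y) m s⁻¹).det ≠ 0 := by
        have hcont : ContinuousAt (fun s : ℝ =>
            (Shat (h y) (fun p => h2 p y) m s⁻¹).det) r :=
          (continuous_detShat _ _ m).continuousAt.comp (continuousAt_inv₀ hrne)
        exact hcont.eventually_ne hdet
      filter_upwards [hc1, hc2] with s hs1 hs2
      rw [key s hs1.ne' hs2 i i, Matrix.one_apply_eq, mul_one]
    rw [Filter.EventuallyEq.deriv_eq evr]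
    -- compute the one-variable derivative
    have ha : HasDerivAt (fun s : ℝ => s⁻¹) (-(r^2)⁻¹) r := hasDerivAt_inv hrne
    have hKs : HasDerivAt
        (fun s : ℝ => Kmat (h y) (fun p => h2 p y) m s⁻¹ i i)
        (δ i * (-(r^2)⁻¹)) r := (hKderiv i).comp r (hasDerivAt_inv hrne)
    have hp2 : HasDerivAt (fun s : ℝ => (s^2)⁻¹) (-(2:ℝ) * (r^3)⁻¹) r := by
      have := hasDerivAt_pow_inv 2 hrne
      convert this using 1
      all_goals norm_num
    have hb : HasDerivAt (fun s : ℝ => (1/2) * (s^2)⁻¹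
        * Kmat (h y) (fun p => h2 p y) m s⁻¹ i i)
        ((1/2) * (-(2:ℝ) * (r^3)⁻¹) * Kmat (h y) (fun p => h2 p y) m r⁻¹ i i
          + (1/2) * (r^2)⁻¹ * (δ i * (-(r^2)⁻¹))) r := by
      have := (hp2.const_mul (1/2 : ℝ)).mul hKs
      refine this.congr_deriv (Eq.symm ?_)
      all_goals ring
    rw [(ha.fun_sub hb).deriv]
    field_simp
    ring
  -- now assemble the (0,0) component of the Ricci tensor
  have hwF_deriv : deriv (wF (h y) (fun p => h2 p y) m) r⁻¹ = ∑ i, δ i := by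
    have : HasDerivAt (wF (h y) (fun p => h2 p y) m) (∑ i, δ i) r⁻¹ :=
      HasDerivAt.fun_sum fun i _ => hKderiv i
    exact this.deriv
  have T1 : ∑ k, pd k (christoffel (warp (Htrunc h h2 m)) k 0 0) x = 0 := by
    refine Finset.sum_eq_zero fun k _ => ?_
    have : christoffel (warp (Htrunc h h2 m)) k 0 0 = fun _ => (0:ℝ) :=
      funext fun z => christoffel_warp_lower00 _ k z
    rw [this, pd_const]
  have T2 : ∑ k, pd 0 (christoffel (warp (Htrunc h h2 m)) k k 0) x
      = -(n:ℝ)*(r^2)⁻¹ + (r^3)⁻¹ * wF (h y) (fun p => h2 p y) m r⁻¹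
        + (1/2) * (r^4)⁻¹ * deriv (wF (h y) (fun p => h2 p y) m) r⁻¹ := by
    rw [Fin.sum_univ_succ]
    have hk0 : pd 0 (christoffel (warp (Htrunc h h2 m)) 0 0 0) x = 0 := by
      have : christoffel (warp (Htrunc h h2 m)) 0 0 0 = fun _ => (0:ℝ) :=
        funext fun z => christoffel_warp_lower00 _ 0 z
      rw [this, pd_const]
    rw [hk0, zero_add, Finset.sum_congr rfl fun i _ => hPhi i]
    rw [Finset.sum_add_distrib, Finset.sum_add_distrib, Finset.sum_const,
      Finset.card_univ, Fintype.card_fin, hwF_deriv, ← Finset.mul_sum, ← Finset.mul_sum]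
    have : wF (h y) (fun p => h2 p y) m r⁻¹
        = ∑ i, Kmat (h y) (fun p => h2 p y) m r⁻¹ i i := rfl
    rw [this]
    push_cast
    ring
  have T3 : ∑ k, ∑ l, christoffel (warp (Htrunc h h2 m)) k k l x
      * christoffel (warp (Htrunc h h2 m)) l 0 0 x = 0 := by
    refine Finset.sum_eq_zero fun k _ => Finset.sum_eq_zero fun l _ => ?_
    rw [christoffel_warp_lower00, mul_zero]
  have T4 : ∑ k, ∑ l, christoffel (warp (Htrunc h h2 m)) k 0 l x
      * christoffel (warp (Htrunc h h2 m)) l k 0 x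
      = (n:ℝ)*(r⁻¹)^2 - 2*r⁻¹*((1/2)*(r^2)⁻¹)*(∑ i, Kmat (h y) (fun p => h2 p y) m r⁻¹ i i)
        + ((1/2)*(r^2)⁻¹)^2 * (∑ i, ∑ j, Kmat (h y) (fun p => h2 p y) m r⁻¹ i j
          * Kmat (h y) (fun p => h2 p y) m r⁻¹ j i) := by
    rw [Fin.sum_univ_succ]
    have hk0 : ∑ l, christoffel (warp (Htrunc h h2 m)) 0 0 l x
        * christoffel (warp (Htrunc h h2 m)) l 0 0 x = 0 :=
      Finset.sum_eq_zero fun l _ => by rw [christoffel_warp_lower00, mul_zero]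
    rw [hk0, zero_add]
    have hin : ∀ i : Fin n, ∑ l, christoffel (warp (Htrunc h h2 m)) i.succ 0 l x
        * christoffel (warp (Htrunc h h2 m)) l i.succ 0 x
        = ∑ j, (r⁻¹ * (1 : Matrix (Fin n) (Fin n) ℝ) i j
            - (1/2) * (r^2)⁻¹ * Kmat (h y) (fun p => h2 p y) m r⁻¹ i j)
          * (r⁻¹ * (1 : Matrix (Fin n) (Fin n) ℝ) j i
            - (1/2) * (r^2)⁻¹ * Kmat (h y) (fun p => h2 p y) m r⁻¹ j i) := by
      intro i
      rw [Fin.sum_univ_succ]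
      have hl0 : christoffel (warp (Htrunc h h2 m)) i.succ 0 0 x
          * christoffel (warp (Htrunc h h2 m)) 0 i.succ 0 x = 0 := by
        rw [christoffel_warp_lower00, zero_mul]
      rw [hl0, zero_add]
      refine Finset.sum_congr rfl fun j _ => ?_
      rw [christoffel_warp_0s, christoffel_warp_s0, hGamma i j, hGamma j i]
    rw [Finset.sum_congr rfl fun i _ => hin i]
    exact sum_gamma_expand _ r⁻¹ ((1/2)*(r^2)⁻¹)
  -- the Hessian term
  have hHess : hessian (warp (Htrunc h h2 m)) (ftrunc f2 m) 0 0 x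
      = -(1/2) + ∑ p ∈ Finset.range (m+1),
          ((2*(p:ℝ)) * (2*(p:ℝ)+1) * ((r)^(2*p+2))⁻¹) * f2 p y := by
    rw [hessian]
    have hzero : ∑ k, christoffel (warp (Htrunc h h2 m)) k 0 0 x
        * pd k (ftrunc f2 m) x = 0 :=
      Finset.sum_eq_zero fun k _ => by rw [christoffel_warp_lower00, zero_mul]
    rw [hzero, sub_zero, pd0_pd0_ftrunc hf2smooth hx0]
    have : tailPt x = y := tailPt_consPt r y
    rw [this]
    have : x 0 = r := rfl
    rw [this]
    try push_cast
    try ring_nf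
  -- assemble
  rw [solitonE, ricci, T1, T2, T3, T4, hHess, warp_00]
  rw [hwF_deriv]
  have hv : vF (h y) (fun p => h2 p y) m r⁻¹
      = ∑ i, ∑ j, Kmat (h y) (fun p => h2 p y) m r⁻¹ i j
        * Kmat (h y) (fun p => h2 p y) m r⁻¹ j i := rfl
  have hw : wF (h y) (fun p => h2 p y) m r⁻¹
      = ∑ i, Kmat (h y) (fun p => h2 p y) m r⁻¹ i i := rfl
  rw [hv, hw]
  field_simp
  ring

end Main

end F2

/-- in the formal expansion of an asymptotically conical gradient expanding
soliton, given `h₀ = −2[Ric(h) − (n−1)h]`, the radial equation (the `(r,r)`-component,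
holding order by order) forces `f₂ = −(1/3)[R − n(n−1)]`, `R` the scalar curvature of `h`. -/
theorem f2_coefficient {n : ℕ} (h : Pt n → Matrix (Fin n) (Fin n) ℝ)
    (hmet : IsMetric h)
    (h2 : ℕ → Pt n → Matrix (Fin n) (Fin n) ℝ) (f2 : ℕ → Pt n → ℝ)
    (hh2smooth : ∀ i j k, ContDiff ℝ (⊤ : ℕ∞) fun x => h2 i x j k)
    (hh2symm : ∀ i x, (h2 i x).IsSymm)
    (hf2smooth : ∀ i, ContDiff ℝ (⊤ : ℕ∞) (f2 i))
    (hh0 : ∀ (x : Pt n) (j k : Fin n),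
      h2 0 x j k = -2 * (ricci h j k x - ((n : ℝ) - 1) * h x j k))
    (hrad : ∀ (k : ℕ) (y : Pt n), ∃ m₀ : ℕ, ∀ m ≥ m₀,
      (fun r : ℝ => solitonE h h2 f2 m 0 0 (consPt r y)) =O[atTop]
        fun r : ℝ => r ^ (-(k : ℤ))) :
    ∀ x : Pt n, f2 1 x = -(1 / 3) * (scalarCurv h x - (n : ℝ) * ((n : ℝ) - 1)) := by
  intro y
  classical
  have hAdet : (h y).det ≠ 0 := (hmet.posdef y).det_pos.ne'
  obtain ⟨m₀, hm₀⟩ := hrad 5 y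
  set m := max m₀ 1 with hmdef
  have hm1 : 1 ≤ m := le_max_right _ _
  have hbig := hm₀ m (le_max_left _ _)
  -- the limit of `r ^ 4 * E r` forced by the decay hypothesis
  have lim0 : Filter.Tendsto
      (fun r : ℝ => r^4 * solitonE h h2 f2 m 0 0 (consPt r y)) Filter.atTop (nhds 0) := by
    have h1 : (fun r : ℝ => r^4 * solitonE h h2 f2 m 0 0 (consPt r y))
        =O[Filter.atTop] fun r : ℝ => r^4 * (r : ℝ) ^ (-(5:ℕ) : ℤ) :=
      (isBigO_refl (fun r : ℝ => r^4) Filter.atTop).mul hbig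
    have h2' : (fun r : ℝ => r^4 * (r:ℝ) ^ (-(5:ℕ):ℤ)) =ᶠ[Filter.atTop]
        fun r : ℝ => r⁻¹ := by
      filter_upwards [Filter.eventually_ne_atTop (0:ℝ)] with r hr
      rw [zpow_neg, zpow_natCast]
      field_simp
    exact (h1.congr' Filter.EventuallyEq.rfl h2').trans_tendsto tendsto_inv_atTop_zero
  -- the limit of `r ^ 4 * E r` computed from the formal expansion
  have hU0 : (F2.Shat (h y) (fun p => h2 p y) m 0).det ≠ 0 := by
    rw [F2.Shat_zero]; exact hAdet
  have hUev : ∀ᶠ t in nhds (0:ℝ), (F2.Shat (h y) (fun p => h2 p y) m t).det ≠ 0 :=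
    (F2.continuous_detShat _ _ m).continuousAt.eventually_ne hU0
  have hinvev : ∀ᶠ r in (Filter.atTop : Filter ℝ),
      (F2.Shat (h y) (fun p => h2 p y) m r⁻¹).det ≠ 0 :=
    tendsto_inv_atTop_zero.eventually hUev
  have hident : ∀ᶠ r in (Filter.atTop : Filter ℝ),
      (fun t : ℝ => -(1/2) * deriv (F2.wF (h y) (fun p => h2 p y) m) t
          - (1/4) * F2.vF (h y) (fun p => h2 p y) m t
          + F2.tailF (fun p => f2 p y) m t) r⁻¹
        = r^4 * solitonE h h2 f2 m 0 0 (consPt r y) := by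
    filter_upwards [hinvev, Filter.eventually_gt_atTop (0:ℝ)] with r hd hr
    rw [F2.main_identity hmet hh2smooth hh2symm hf2smooth y m hr hd]
    rw [mul_add]
    have hfirst : r^4 * ((-(1/2) * deriv (F2.wF (h y) (fun p => h2 p y) m) r⁻¹
        - (1/4) * F2.vF (h y) (fun p => h2 p y) m r⁻¹) * (r^4)⁻¹)
        = -(1/2) * deriv (F2.wF (h y) (fun p => h2 p y) m) r⁻¹
          - (1/4) * F2.vF (h y) (fun p => h2 p y) m r⁻¹ := by
      field_simp
    have hsecond : r^4 * (∑ p ∈ Finset.range (m+1),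
          (2*(p:ℝ))*(2*(p:ℝ)+1) * ((r^(2*p+2))⁻¹) * f2 p y)
        = F2.tailF (fun p => f2 p y) m r⁻¹ := by
      rw [Finset.mul_sum, F2.tailF]
      refine Finset.sum_congr rfl fun p _ => ?_
      rcases Nat.eq_zero_or_pos p with rfl | hp
      · norm_num
      · have he : 2*p+2 = (2*p-2) + 4 := by omega
        rw [he, pow_add, inv_pow]
        have hr4 : r^4 ≠ 0 := pow_ne_zero _ hr.ne'
        have hrp : r^(2*p-2) ≠ 0 := pow_ne_zero _ hr.ne'
        field_simp
    rw [hfirst, hsecond]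
  have hcont : ContinuousAt (fun t : ℝ =>
      -(1/2) * deriv (F2.wF (h y) (fun p => h2 p y) m) t
        - (1/4) * F2.vF (h y) (fun p => h2 p y) m t
        + F2.tailF (fun p => f2 p y) m t) 0 :=
    ((continuousAt_const.mul (F2.continuousAt_deriv_wF _ _ m hAdet)).sub
      (continuousAt_const.mul (F2.continuousAt_vF _ _ m hAdet))).add
      ((F2.continuous_tailF _ m).continuousAt)
  have limc : Filter.Tendsto
      (fun r : ℝ => r^4 * solitonE h h2 f2 m 0 0 (consPt r y)) Filter.atTop
      (nhds (-(1/2) * deriv (F2.wF (h y) (fun p => h2 p y) m) 0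
        - (1/4) * F2.vF (h y) (fun p => h2 p y) m 0
        + F2.tailF (fun p => f2 p y) m 0)) :=
    Filter.Tendsto.congr' hident (hcont.tendsto.comp tendsto_inv_atTop_zero)
  have hval := tendsto_nhds_unique limc lim0
  rw [F2.deriv_wF_zero _ _ m hAdet, F2.vF_zero, F2.tailF_zero _ hm1] at hval
  -- compute the trace term
  have htr : ∑ i, ∑ j, (h y)⁻¹ i j * h y i j = (n:ℝ) := by
    have hsym := hmet.symm y
    have e2 : ∀ i : Fin n, ∑ j, (h y)⁻¹ i j * h y i j
        = ((h y)⁻¹ * h y) i i := by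
      intro i
      rw [Matrix.mul_apply]
      exact Finset.sum_congr rfl fun j _ => by rw [hsym.apply j i]
    rw [Finset.sum_congr rfl fun i _ => e2 i,
      Matrix.nonsing_inv_mul _ (isUnit_iff_ne_zero.mpr hAdet)]
    simp [Matrix.one_apply]
  have hβ : ∑ i, ∑ j, (h y)⁻¹ i j * h2 0 y i j
      = -2 * scalarCurv h y + 2*((n:ℝ)-1)*(n:ℝ) := by
    have e1 : ∀ i j : Fin n, (h y)⁻¹ i j * h2 0 y i j
        = -2 * ((h y)⁻¹ i j * ricci h i j y)
          + 2*((n:ℝ)-1) * ((h y)⁻¹ i j * h y i j) := by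
      intro i j
      rw [hh0 y i j]
      ring
    rw [Finset.sum_congr rfl fun i _ => Finset.sum_congr rfl fun j _ => e1 i j]
    simp only [Finset.sum_add_distrib, ← Finset.mul_sum]
    rw [htr]
    have hsc : ∑ i, ∑ j, (h y)⁻¹ i j * ricci h i j y = scalarCurv h y := rfl
    rw [hsc]
  rw [hβ] at hval
  have hRic := hval
  linarith [hRic]
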